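/- arXiv:2304.04705 — 5 statements merged into one kernel-verified Lean document; each statement's English description precedes it below -/
import Mathlib

section
/- Let G = (I, A, src, tgt, o, d) be a condensed DAG. Fix an arc a ∈ A and a route r ∈ R containing a such that ℓ_{a,r} = ℓ_a. Then for every arc a' that precedes a in r (i.e., a' occurs in r with ℓ_{a',r} < ℓ_{a,r}), we have ℓ_{a',r} = ℓ_{a'}. -/
/-- A condensed DAG: finite node set `I`, finite arc set `A`, arc endpoint maps
`src, tgt : A → I`, distinct origin `o` and destination `d`, no directed cycles,
and every arc lies on at least one route from `o` to `d`. -/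
structure CondensedDAG (I : Type*) (A : Type*) [Fintype I] [Fintype A] where
  src : A → I
  tgt : A → I
  o : I
  d : I
  o_ne_d : o ≠ d
  /-- No directed cycle: there is no nonempty chain of consecutive arcs whose
  last arc's target is the first arc's source. -/
  acyclic : ∀ (a : A) (l : List A),
      List.Chain' (fun x y => tgt x = src y) (a :: l) →
      tgt ((a :: l).getLast (List.cons_ne_nil a l)) ≠ src a
  /-- Every arc lies on at least one route from `o` to `d`. -/
  covered : ∀ a : A, ∃ r : List A,
      (r ≠ [] ∧ (∀ b ∈ r.head?, src b = o) ∧ (∀ b ∈ r.getLast?, tgt b = d) ∧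
        List.Chain' (fun x y => tgt x = src y) r) ∧ a ∈ r

namespace CondensedDAG

variable {I A : Type*} [Fintype I] [Fintype A]

/-- A route: a nonempty list of consecutive arcs starting at `o` and ending at `d`. -/
def IsRoute (G : CondensedDAG I A) (r : List A) : Prop :=
  r ≠ [] ∧ (∀ b ∈ r.head?, G.src b = G.o) ∧ (∀ b ∈ r.getLast?, G.tgt b = G.d) ∧
    List.Chain' (fun x y => G.tgt x = G.src y) r

/-- The depth `ℓ_a` of an arc: the largest (1-based) position at which `a`
occurs in some route. -/
noncomputable def depth (G : CondensedDAG I A) (a : A) : ℕ :=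
  sSup {k : ℕ | 1 ≤ k ∧ ∃ r : List A, G.IsRoute r ∧ r[k - 1]? = some a}

/-- The depth `ℓ(G)` of the condensed DAG: maximal depth over all arcs. -/
noncomputable def graphDepth (G : CondensedDAG I A) : ℕ :=
  sSup (Set.range G.depth)

/-- The height `m_a` of an arc: the largest value of `|r| + 1 - ℓ_{a,r}` over
routes `r` containing `a` at (1-based) position `ℓ_{a,r}`. -/
noncomputable def height (G : CondensedDAG I A) (a : A) : ℕ :=
  sSup {k : ℕ | ∃ (r : List A) (j : ℕ), G.IsRoute r ∧ 1 ≤ j ∧ r[j - 1]? = some a ∧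
    k = r.length + 1 - j}

/-- The height `m(G)` of the condensed DAG: maximal height over all arcs. -/
noncomputable def graphHeight (G : CondensedDAG I A) : ℕ :=
  sSup (Set.range G.height)

lemma route_nodup (G : CondensedDAG I A) {r : List A} (hr : G.IsRoute r) :
    r.Nodup := by
  by_contra h
  rw [List.nodup_iff_getElem?_ne_getElem?] at h
  push_neg at h
  obtain ⟨i, j, hij, hjlen, heq⟩ := h
  have hilen : i < r.length := lt_trans hij hjlen
  set s := (r.drop i).take (j - i) with hs
  have hchain := hr.2.2.2
  have hslen : s.length = j - i := by
    simp only [hs, List.length_take, List.length_drop]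
    omega
  have hsne : s ≠ [] := by
    intro hnil
    rw [hnil] at hslen
    simp at hslen
    omega
  have hchain_s : List.Chain' (fun x y => G.tgt x = G.src y) s :=
    (hchain.suffix (List.drop_suffix i r)).prefix (List.take_prefix _ _)
  obtain ⟨a0, t, hst⟩ := List.exists_cons_of_ne_nil hsne
  -- head of s is r[i]
  have hhead : s[0]? = r[i]? := by
    rw [hs, List.getElem?_take, List.getElem?_drop]
    simp only [if_pos (by omega : 0 < j - i), Nat.add_zero]
  have ha0 : a0 = r[i] := by
    rw [hst] at hhead
    simp only [List.getElem?_cons_zero, List.getElem?_eq_getElem hilen] at hhead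
    exact Option.some.inj hhead
  -- last of s is r[j-1]
  have hlastq : s[s.length - 1]? = r[j - 1]? := by
    rw [hs, hslen, List.getElem?_take, List.getElem?_drop]
    rw [if_pos (by omega : j - i - 1 < j - i)]
    congr 1
    omega
  have hj1len : j - 1 < r.length := by omega
  have hlast : s.getLast hsne = r[j - 1] := by
    have := List.getLast?_eq_getElem? (l := s)
    rw [List.getLast?_eq_getLast hsne] at this
    rw [hlastq, List.getElem?_eq_getElem hj1len] at this
    exact Option.some.inj this
  -- chain relation: tgt r[j-1] = src r[j]
  have hrel : G.tgt (r[j - 1]) = G.src (r[j]) := by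
    have hc := List.isChain_iff_getElem.mp hchain (j - 1) (by omega)
    simpa only [List.get_eq_getElem, Nat.sub_add_cancel (by omega : 1 ≤ j)] using hc
  have hij_eq : r[i] = r[j] := by
    rw [List.getElem?_eq_getElem hilen, List.getElem?_eq_getElem hjlen] at heq
    exact Option.some.inj heq
  -- contradiction with acyclicity
  rw [hst] at hchain_s
  apply G.acyclic a0 t hchain_s
  have : (a0 :: t).getLast (List.cons_ne_nil a0 t) = s.getLast hsne := by
    congr 1
    · exact hst.symm
  rw [this, hlast, hrel, ha0, hij_eq]

lemma depth_set_bddAbove (G : CondensedDAG I A) (a : A) :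
    BddAbove {k : ℕ | 1 ≤ k ∧ ∃ r : List A, G.IsRoute r ∧ r[k - 1]? = some a} := by
  refine ⟨Fintype.card A, fun k hk => ?_⟩
  obtain ⟨hk1, r, hr, hra⟩ := hk
  have hlen : k - 1 < r.length := (List.getElem?_eq_some_iff.mp hra).1
  have := (G.route_nodup hr).length_le_card
  omega

end CondensedDAG

/-- if arc `a` occurs in route `r` at position `j = ℓ_a` (its depth),
then every arc `a'` preceding `a` in `r` (at position `j' < j`) satisfies
`ℓ_{a',r} = ℓ_{a'}`, i.e. its position in `r` equals its depth. -/
theorem depth_of_preceding_arcs_on_depth_attaining_route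
    {I A : Type*} [Fintype I] [Fintype A]
    (G : CondensedDAG I A) (r : List A) (hr : G.IsRoute r)
    (a : A) (j : ℕ) (hj : 1 ≤ j) (ha : r[j - 1]? = some a)
    (hattain : j = G.depth a)
    (a' : A) (j' : ℕ) (hj' : 1 ≤ j') (ha' : r[j' - 1]? = some a')
    (hlt : j' < j) :
    G.depth a' = j' := by
  have hjlen : j - 1 < r.length := (List.getElem?_eq_some_iff.mp ha).1
  have hj'lt : j' - 1 < r.length := (List.getElem?_eq_some_iff.mp ha').1
  have hj'len : j' < r.length := by omega
  set S' := {k : ℕ | 1 ≤ k ∧ ∃ r : List A, G.IsRoute r ∧ r[k - 1]? = some a'} with hS'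
  have hmem : j' ∈ S' := ⟨hj', r, hr, ha'⟩
  have hbdd : BddAbove S' := G.depth_set_bddAbove a'
  have hle : j' ≤ G.depth a' := le_csSup hbdd hmem
  -- now show depth a' ≤ j'
  have hge : G.depth a' ≤ j' := by
    by_contra hcon
    push_neg at hcon
    set m := G.depth a' with hm
    have hmmem : m ∈ S' := Nat.sSup_mem ⟨j', hmem⟩ hbdd
    obtain ⟨hm1, r'', hr'', ha''⟩ := hmmem
    have hm1len : m - 1 < r''.length := (List.getElem?_eq_some_iff.mp ha'').1
    have hmlen : m ≤ r''.length := by omega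
    set q := r''.take m ++ r.drop j' with hq
    have htklen : (r''.take m).length = m := by
      rw [List.length_take]; omega
    have hdropne : r.drop j' ≠ [] := by
      intro hnil
      have := List.length_drop (i := j') (l := r)
      rw [hnil] at this
      simp at this
      omega
    have htkne : r''.take m ≠ [] := by
      intro hnil
      rw [hnil] at htklen
      simp at htklen
      omega
    -- q is a route
    have hqroute : G.IsRoute q := by
      refine ⟨by simp [hq, htkne], ?_, ?_, ?_⟩
      · -- head
        have : q.head? = r''.head? := by
          rw [hq, List.head?_eq_getElem?, List.head?_eq_getElem?,
            List.getElem?_append_left (by omega), List.getElem?_take,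
            if_pos (by omega : 0 < m)]
        rw [this]
        exact hr''.2.1
      · -- last
        have : q.getLast? = r.getLast? := by
          rw [hq, List.getLast?_append_of_ne_nil _ hdropne,
            List.getLast?_eq_getElem?, List.getLast?_eq_getElem?,
            List.getElem?_drop, List.length_drop]
          congr 1
          omega
        rw [this]
        exact hr.2.2.1
      · -- chain
        rw [hq, List.Chain', List.isChain_append]
        refine ⟨hr''.2.2.2.prefix (List.take_prefix _ _),
          hr.2.2.2.suffix (List.drop_suffix _ _), ?_⟩
        intro x hx y hy
        have hxa : x = a' := by
          rw [List.getLast?_eq_getElem?, htklen, List.getElem?_take,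
            if_pos (by omega : m - 1 < m)] at hx
          rw [ha''] at hx
          exact (Option.some.inj hx).symm
        have hy' : r[j']? = some y := by
          rwa [List.head?_eq_getElem?, List.getElem?_drop] at hy
        have hyv : y = r[j'] := by
          rw [List.getElem?_eq_getElem hj'len] at hy'
          exact (Option.some.inj hy').symm
        have ha'v : r[j' - 1] = a' := by
          rw [List.getElem?_eq_getElem hj'lt] at ha'
          exact Option.some.inj ha'
        have hrel := List.isChain_iff_getElem.mp hr.2.2.2 (j' - 1) (by omega)
        simp only [List.get_eq_getElem, Nat.sub_add_cancel hj'] at hrel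
        rw [hxa, hyv, ← ha'v]
        exact hrel
    -- position of a in q
    set k := m + (j - j') with hk
    have hkmem : k ∈ {k : ℕ | 1 ≤ k ∧ ∃ r : List A, G.IsRoute r ∧ r[k - 1]? = some a} := by
      refine ⟨by omega, q, hqroute, ?_⟩
      rw [hq, List.getElem?_append_right (by omega : (r''.take m).length ≤ k - 1),
        htklen, List.getElem?_drop]
      have : j' + (k - 1 - m) = j - 1 := by omega
      rw [this]
      exact ha
    have h2 := le_csSup (G.depth_set_bddAbove a) hkmem
    have h3 : k ≤ j := by rw [hattain]; exact h2
    omega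
  omega
end

section
/- Let G = (I, A, src, tgt, o, d) be a condensed DAG with A nonempty. Then for every integer k with 1 ≤ k ≤ ℓ(G), there exists an arc a ∈ A with depth ℓ_a = k. -/
namespace CondensedDAG

variable {I A : Type*} [Fintype I] [Fintype A]

variable {G : CondensedDAG I A}

/-- Routes have no repeated arcs, by acyclicity. -/
lemma IsRoute.nodup {r : List A} (h : G.IsRoute r) : r.Nodup := by
  obtain ⟨-, -, -, hc⟩ := h
  rw [List.nodup_iff_getElem?_ne_getElem?]
  intro i j hij hj heq
  have hi : i < r.length := lt_trans hij hj
  rw [List.getElem?_eq_getElem hi, List.getElem?_eq_getElem hj, Option.some_inj] at heq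
  have hchain := List.isChain_iff_getElem.mp hc
  set seg := (r.drop i).take (j - i) with hseg
  have hlen : seg.length = j - i := by
    simp only [hseg, List.length_take, List.length_drop]; omega
  have hne : seg ≠ [] := by
    intro h0; rw [h0] at hlen; simp at hlen; omega
  have hgetseg : ∀ (m : ℕ) (hm : m < seg.length), seg[m] = r[i + m]'(by omega) := by
    intro m hm
    simp only [hseg, List.getElem_take, List.getElem_drop]
  have hcseg : List.Chain' (fun x y => G.tgt x = G.src y) seg := by
    rw [List.Chain', List.isChain_iff_getElem]
    intro m hm
    rw [hgetseg m (by omega),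
      hgetseg (m + 1) (by omega)]
    have := hchain (i + m) (by omega)
    simpa [← Nat.add_assoc] using this
  have hcons : seg.head hne :: seg.tail = seg := List.cons_head_tail hne
  have hacy := G.acyclic (seg.head hne) seg.tail (by rw [hcons]; exact hcseg)
  apply hacy
  rw [List.getLast_eq_getElem]
  have hhead : seg.head hne = seg[0]'(by omega) := by
    rw [← List.getElem_zero (by omega)]
  have hlen2 : (seg.head hne :: seg.tail).length = seg.length := by
    rw [hcons]
  have hgl : (seg.head hne :: seg.tail)[(seg.head hne :: seg.tail).length - 1]'(by omega)
      = seg[seg.length - 1]'(by omega) := by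
    congr 1 <;> rw [hcons]
  rw [hgl, hhead, hgetseg 0 (by omega), hgetseg (seg.length - 1) (by omega)]
  have h1 : i + (seg.length - 1) = j - 1 := by omega
  simp only [h1, Nat.add_zero]
  rw [heq]
  have h2 := hchain (j - 1) (by omega)
  simp only [show j - 1 + 1 = j from by omega] at h2
  exact h2

lemma IsRoute.length_le {r : List A} (h : G.IsRoute r) : r.length ≤ Fintype.card A :=
  h.nodup.length_le_card

/-- The defining set of `depth`. -/
lemma depth_bddAbove (a : A) :
    BddAbove {k : ℕ | 1 ≤ k ∧ ∃ r : List A, G.IsRoute r ∧ r[k - 1]? = some a} := by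
  refine ⟨Fintype.card A, fun k hk => ?_⟩
  obtain ⟨hk1, r, hr, hra⟩ := hk
  obtain ⟨hlt, -⟩ := List.getElem?_eq_some_iff.mp hra
  have := hr.length_le
  omega

lemma mem_depth_set (a : A) :
    ∃ k, k ∈ {k : ℕ | 1 ≤ k ∧ ∃ r : List A, G.IsRoute r ∧ r[k - 1]? = some a} := by
  obtain ⟨r, hr, har⟩ := G.covered a
  obtain ⟨n, hn, hna⟩ := List.mem_iff_getElem.mp har
  have h0 : r[n]? = some a := List.getElem?_eq_some_iff.mpr ⟨hn, hna⟩
  exact ⟨n + 1, Nat.le_add_left 1 n, r, hr, h0⟩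

lemma depth_mem (a : A) :
    G.depth a ∈ {k : ℕ | 1 ≤ k ∧ ∃ r : List A, G.IsRoute r ∧ r[k - 1]? = some a} :=
  Nat.sSup_mem (mem_depth_set a) (depth_bddAbove a)

lemma le_depth {a : A} {k : ℕ} (hk1 : 1 ≤ k) {r : List A} (hr : G.IsRoute r)
    (hra : r[k - 1]? = some a) : k ≤ G.depth a :=
  le_csSup (depth_bddAbove a) ⟨hk1, r, hr, hra⟩

/-- Step down: if some arc has depth `n + 2`, some arc has depth `n + 1`. -/
lemma exists_depth_pred (a : A) (n : ℕ) (h : G.depth a = n + 2) :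
    ∃ b : A, G.depth b = n + 1 := by
  have hmem := depth_mem (G := G) a
  rw [h] at hmem
  obtain ⟨-, r, hr, hra⟩ := hmem
  replace hra : r[n + 1]? = some a := hra
  obtain ⟨hlt, hra'⟩ := List.getElem?_eq_some_iff.mp hra
  have hchain := List.isChain_iff_getElem.mp hr.2.2.2
  set b := r[n]'(by omega) with hb
  have htb : G.tgt b = G.src a := by
    have := hchain n (by omega)
    rw [hb, this, hra']
  refine ⟨b, le_antisymm ?_ ?_⟩
  · -- every element of the depth set of b is ≤ n + 1
    have hb1 : r[n]? = some b := List.getElem?_eq_some_iff.mpr ⟨by omega, rfl⟩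
    show sSup {k : ℕ | 1 ≤ k ∧ ∃ r : List A, G.IsRoute r ∧ r[k - 1]? = some b} ≤ n + 1
    apply csSup_le
    · exact ⟨n + 1, Nat.le_add_left 1 n, r, hr, hb1⟩
    intro j hj
    by_contra hcon
    push_neg at hcon
    obtain ⟨hj1, r', hr', hrb⟩ := hj
    obtain ⟨hlt', hrb'⟩ := List.getElem?_eq_some_iff.mp hrb
    -- build a route where a sits at position j + 1 > n + 2
    set r'' := r'.take j ++ r.drop (n + 1) with hr''
    have hjlen : j ≤ r'.length := by omega
    have hlt1 : (r'.take j).length = j := by simp; omega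
    have hdne : r.drop (n + 1) ≠ [] := by
      intro h0
      have := congrArg List.length h0
      simp at this; omega
    have hroute : G.IsRoute r'' := by
      refine ⟨?_, ?_, ?_, ?_⟩
      · simp only [hr'']
        intro h0
        rcases List.append_eq_nil_iff.mp h0 with ⟨h1, h2⟩
        exact hdne h2
      · intro c hc
        have htne : r'.take j ≠ [] := by
          intro h0
          have := congrArg List.length h0
          rw [hlt1] at this
          simp at this
          omega
        have hh2 : (r'.take j).head? = r'.head? := by
          rw [List.head?_eq_getElem?, List.head?_eq_getElem?,
            List.getElem?_take_of_lt (by omega)]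
        rw [hr'', List.head?_append_of_ne_nil _ htne, hh2] at hc
        exact hr'.2.1 c hc
      · intro c hc
        have hgl2 : (r.drop (n + 1)).getLast? = r.getLast? := by
          rw [List.getLast?_eq_getElem?, List.getLast?_eq_getElem?, List.getElem?_drop,
            List.length_drop]
          congr 1
          omega
        rw [hr'', List.getLast?_append_of_ne_nil _ hdne, hgl2] at hc
        exact hr.2.2.1 c hc
      · rw [List.Chain', List.isChain_append]
        refine ⟨List.IsChain.take hr'.2.2.2 j, List.IsChain.drop hr.2.2.2 (n + 1), ?_⟩
        intro x hx y hy
        rw [List.getLast?_eq_getElem?, hlt1, List.getElem?_take_of_lt (by omega),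
          List.getElem?_eq_getElem (by omega)] at hx
        rw [List.head?_eq_getElem?, List.getElem?_drop, Nat.add_zero,
          List.getElem?_eq_getElem (by omega)] at hy
        rw [Option.mem_some_iff] at hx hy
        subst hx
        subst hy
        rw [hrb', htb, ← hra']
    have hpos : r''[j]? = some a := by
      rw [hr'', List.getElem?_append_right (by omega), hlt1, Nat.sub_self,
        List.getElem?_drop, Nat.add_zero]
      exact hra
    have := le_depth (G := G) (k := j + 1) (by omega) hroute hpos
    omega
  · exact le_depth (Nat.le_add_left 1 n) hr
      (List.getElem?_eq_some_iff.mpr ⟨by omega, rfl⟩)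

lemma exists_depth_eq_graphDepth [Nonempty A] :
    ∃ a : A, G.depth a = G.graphDepth := by
  have hbdd : BddAbove (Set.range G.depth) := (Set.finite_range G.depth).bddAbove
  have := Nat.sSup_mem (Set.range_nonempty G.depth) hbdd
  exact this

end CondensedDAG

/-- in a condensed DAG with `A` nonempty, every depth level
`1 ≤ k ≤ ℓ(G)` is attained by some arc. -/
theorem exists_arc_of_each_depth
    {I A : Type*} [Fintype I] [Fintype A] [Nonempty A]
    (G : CondensedDAG I A) (k : ℕ) (hk1 : 1 ≤ k) (hk2 : k ≤ G.graphDepth) :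
    ∃ a : A, G.depth a = k := by
  obtain ⟨a0, ha0⟩ := CondensedDAG.exists_depth_eq_graphDepth (G := G)
  suffices H : ∀ n k, 1 ≤ k → k + n = G.graphDepth → ∃ a : A, G.depth a = k from
    H (G.graphDepth - k) k hk1 (by omega)
  intro n
  induction n with
  | zero =>
    intro k hk hkn
    exact ⟨a0, by rw [ha0]; omega⟩
  | succ n ih =>
    intro k hk hkn
    obtain ⟨b, hb⟩ := ih (k + 1) (by omega) (by omega)
    obtain ⟨k', rfl⟩ : ∃ k', k = k' + 1 := ⟨k - 1, by omega⟩
    exact CondensedDAG.exists_depth_pred b k' hb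
end

section
/- Let G = (I, A, src, tgt, o, d) be a condensed DAG. For any fixed route r ∈ R and any two arcs a, a' occurring in r with m_{a,r} < m_{a',r}, the heights satisfy m_a < m_{a'}; that is, arcs along a route from origin to destination have strictly decreasing height. -/
/-- A condensed DAG: finite node set `I`, finite arc set `A`, arc endpoint maps
`src, tgt : A → I`, distinct origin `o` and destination `d`, no directed cycles,
and every arc lies on at least one route from `o` to `d`. -/
lemma chain'_iff_getElem' {α : Type*} {R : α → α → Prop} {l : List α} :
    List.Chain' R l ↔ ∀ i (_ : i + 1 < l.length), R l[i] l[i+1] := by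
  exact List.isChain_iff_getElem

lemma chain_nodup' {α β : Type*} (src tgt : α → β)
    (acyc : ∀ (a : α) (l : List α),
      List.Chain' (fun x y => tgt x = src y) (a :: l) →
      tgt ((a :: l).getLast (List.cons_ne_nil a l)) ≠ src a)
    {r : List α} (h : List.Chain' (fun x y => tgt x = src y) r) : r.Nodup := by
  have key : ∀ i k (hik : i < k) (hk : k < r.length), r[i] ≠ r[k] := by
    intro i k hik hk heq
    have hi : i < r.length := by omega
    obtain ⟨n, hn⟩ : ∃ n, k - i = n + 1 := ⟨k - i - 1, by omega⟩
    set l : List α := (r.drop (i+1)).take n with hl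
    have hseg : r[i] :: l = (r.drop i).take (k - i) := by
      rw [List.drop_eq_getElem_cons hi, hn, List.take_succ_cons]
    have hchain : List.Chain' (fun x y => tgt x = src y) (r[i] :: l) := by
      rw [hseg]
      exact h.infix ((List.take_prefix _ _).isInfix.trans (List.drop_suffix _ _).isInfix)
    have h0 : (r[i] :: l).getLast? = some r[k-1] := by
      rw [hseg, List.getLast?_eq_getElem?]
      simp only [List.getElem?_take, List.getElem?_drop, List.length_take, List.length_drop]
      rw [if_pos (by omega), (show i + (min (k-i) (r.length-i) - 1) = k-1 by omega)]
      exact List.getElem?_eq_getElem (by omega)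
    have hlast : (r[i] :: l).getLast (List.cons_ne_nil _ _) = r[k-1] := by
      rw [List.getLast?_eq_getLast (List.cons_ne_nil _ _)] at h0
      exact Option.some_inj.mp h0
    have hstep : tgt r[k-1] = src r[k] := by
      have := chain'_iff_getElem'.mp h (k-1) (by omega)
      simpa [(by omega : k - 1 + 1 = k)] using this
    exact acyc r[i] l hchain (by rw [hlast, hstep, ← heq])
  rw [List.nodup_iff_injective_get]
  intro i k hik
  simp only [List.get_eq_getElem] at hik
  by_contra hne
  have hne' : (i : ℕ) ≠ (k : ℕ) := fun h => hne (Fin.ext h)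
  rcases Nat.lt_or_ge i k with h1 | h1
  · exact key i k h1 k.isLt hik
  · exact key k i (by omega) i.isLt hik.symm

section Aux

variable {I A : Type*} [Fintype I] [Fintype A]

lemma route_length_le (G : CondensedDAG I A) {r : List A} (hr : G.IsRoute r) :
    r.length ≤ Fintype.card A :=
  (chain_nodup' G.src G.tgt G.acyclic hr.2.2.2).length_le_card

lemma heightSet_bdd (G : CondensedDAG I A) (a : A) :
    BddAbove {k : ℕ | ∃ (r : List A) (j : ℕ), G.IsRoute r ∧ 1 ≤ j ∧ r[j - 1]? = some a ∧
      k = r.length + 1 - j} := by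
  refine ⟨Fintype.card A, fun k hk => ?_⟩
  obtain ⟨r, j, hr, hj, _, hk⟩ := hk
  have := route_length_le G hr
  omega

end Aux


/-- along a fixed route, arcs have strictly decreasing height:
if `a` occurs at (1-based) position `j` and `a'` at position `j'` in a route `r`,
and the height-positions satisfy `m_{a,r} = |r| + 1 - j < |r| + 1 - j' = m_{a',r}`,
then `m_a < m_{a'}`. -/
theorem height_strictAnti_along_route
    {I A : Type*} [Fintype I] [Fintype A]
    (G : CondensedDAG I A) (r : List A) (hr : G.IsRoute r)
    (a a' : A) (j j' : ℕ) (hj : 1 ≤ j) (hj' : 1 ≤ j')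
    (ha : r[j - 1]? = some a) (ha' : r[j' - 1]? = some a')
    (hlt : r.length + 1 - j < r.length + 1 - j') :
    G.height a < G.height a' := by
  obtain ⟨hjlen, hja⟩ := List.getElem?_eq_some_iff.mp ha
  obtain ⟨hj'len, hj'a⟩ := List.getElem?_eq_some_iff.mp ha'
  have hjj' : j' < j := by omega
  -- the height of a is attained by some route r* at position j*
  have hmem : G.height a ∈ {k : ℕ | ∃ (rr : List A) (jj : ℕ), G.IsRoute rr ∧ 1 ≤ jj ∧
      rr[jj - 1]? = some a ∧ k = rr.length + 1 - jj} :=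
    Nat.sSup_mem ⟨r.length + 1 - j, r, j, hr, hj, ha, rfl⟩ (heightSet_bdd G a)
  obtain ⟨s, js, hs, hjs, has, hheq⟩ := hmem
  obtain ⟨hslen, hsa⟩ := List.getElem?_eq_some_iff.mp has
  -- build the new route: prefix of r before a, then tail of s from a on
  set t : List A := r.take (j-1) ++ s.drop (js-1) with ht
  have htk_len : (r.take (j-1)).length = j - 1 := by
    rw [List.length_take]; omega
  have hdr_len : (s.drop (js-1)).length = s.length - (js-1) := List.length_drop
  have htk_ne : r.take (j-1) ≠ [] := by
    intro h; have := congrArg List.length h; simp [htk_len] at this; omega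
  have hdr_ne : s.drop (js-1) ≠ [] := by
    intro h; have := congrArg List.length h; simp [hdr_len] at this; omega
  have ht_len : t.length = (j - 1) + (s.length - (js-1)) := by
    rw [ht, List.length_append, htk_len, hdr_len]
  have hchain_r := hr.2.2.2
  have hchain_s := hs.2.2.2
  have ht_route : G.IsRoute t := by
    refine ⟨?_, ?_, ?_, ?_⟩
    · intro h; have := congrArg List.length h; simp [ht_len] at this; omega
    · intro b hb
      rw [ht, List.head?_append] at hb
      have h0 : (r.take (j-1)).head? = some (r[0]'(by omega)) := by
        rw [List.head?_eq_getElem?, List.getElem?_take, if_pos (by omega)]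
        exact List.getElem?_eq_getElem (by omega)
      rw [h0] at hb
      simp only [Option.or, Option.mem_def, Option.some_inj] at hb
      refine hb ▸ hr.2.1 _ ?_
      rw [List.head?_eq_getElem?]
      exact List.getElem?_eq_getElem (by omega)
    · intro b hb
      rw [ht, List.getLast?_append] at hb
      have h0 : (s.drop (js-1)).getLast? = some (s[s.length - 1]'(by omega)) := by
        rw [List.getLast?_eq_getElem?, List.getElem?_drop, hdr_len,
          (show js - 1 + (s.length - (js-1) - 1) = s.length - 1 by omega)]
        exact List.getElem?_eq_getElem (by omega)
      rw [h0] at hb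
      simp only [Option.or, Option.mem_def, Option.some_inj] at hb
      refine hb ▸ hs.2.2.1 _ ?_
      rw [List.getLast?_eq_getElem?]
      exact List.getElem?_eq_getElem (by omega)
    · rw [ht, List.Chain', List.isChain_append]
      refine ⟨hchain_r.prefix (List.take_prefix _ _),
        hchain_s.suffix (List.drop_suffix _ _), ?_⟩
      intro x hx y hy
      have hxval : x = r[j-2]'(by omega) := by
        rw [List.getLast?_eq_getElem?, htk_len, List.getElem?_take, if_pos (by omega),
          List.getElem?_eq_getElem (by omega : j - 1 - 1 < r.length)] at hx
        simpa [(show j - 1 - 1 = j - 2 by omega)] using hx.symm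
      have hyval : y = a := by
        rw [List.head?_eq_getElem?, List.getElem?_drop, Nat.add_zero, has] at hy
        simpa using hy.symm
      have hstep : G.tgt (r[j-2]'(by omega)) = G.src (r[j-1]'hjlen) := by
        have := chain'_iff_getElem'.mp hchain_r (j-2) (by omega)
        simpa [(show j - 2 + 1 = j - 1 by omega)] using this
      rw [hxval, hyval, ← hja]
      exact hstep
  -- a' occurs in t at position j'
  have hta' : t[j'-1]? = some a' := by
    rw [ht, List.getElem?_append, htk_len, if_pos (by omega)]
    rw [List.getElem?_take, if_pos (by omega)]
    exact ha'
  have hmem' : t.length + 1 - j' ∈ {k : ℕ | ∃ (rr : List A) (jj : ℕ), G.IsRoute rr ∧ 1 ≤ jj ∧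
      rr[jj - 1]? = some a' ∧ k = rr.length + 1 - jj} :=
    ⟨t, j', ht_route, hj', hta', rfl⟩
  have hle : t.length + 1 - j' ≤ G.height a' := le_csSup (heightSet_bdd G a') hmem'
  have : G.height a < t.length + 1 - j' := by
    rw [hheq, ht_len]; omega
  omega
end

section
/- Let G = (I, A, src, tgt, o, d) be a condensed DAG, let A_O be a finite set, π : A → A_O a map, s_b : [0,∞) → [0,∞) a strictly increasing continuous function for each b ∈ A_O, g_o > 0, and β > 0. Then the function F : W → ℝ defined by F(w) := Σ_{b∈A_O} ∫_0^{w_{[b]}} s_b(u) du + (1/β) Σ_{i∈I, i≠d} [ Σ_{a∈A_i^+} w_a ln w_a − (Σ_{a∈A_i^+} w_a) ln(Σ_{a∈A_i^+} w_a) ] is strictly convex on the convex set W. -/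
namespace CondensedDAG

variable {I A : Type*} [Fintype I] [Fintype A] [DecidableEq I]

/-- The feasible flow set `W`: nonnegative arc flows with total outflow `gO` at
the origin and flow conservation at every intermediate node. -/
def feasible (G : CondensedDAG I A) (gO : ℝ) : Set (A → ℝ) :=
  {w | (∀ a, 0 ≤ w a) ∧
    (∑ a ∈ Finset.univ.filter (fun a => G.src a = G.o), w a) = gO ∧
    ∀ i : I, i ≠ G.o → i ≠ G.d →
      (∑ a ∈ Finset.univ.filter (fun a => G.src a = i), w a) =
        (∑ a ∈ Finset.univ.filter (fun a => G.tgt a = i), w a)}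

/-- The objective `F(w) = Σ_b ∫_0^{w_[b]} s_b + (1/β) Σ_{i ≠ d} χ_i(w_{A_i^+})`,
where `w_[b]` is the total flow on arcs projecting to `b ∈ A_O` and `χ_i` is the
entropy term at node `i` (with the convention `0 ln 0 = 0`, automatic since
`Real.log 0 = 0`). -/
noncomputable def objF {A_O : Type*} [Fintype A_O] [DecidableEq A_O]
    (G : CondensedDAG I A) (π : A → A_O) (s : A_O → ℝ → ℝ) (β : ℝ)
    (w : A → ℝ) : ℝ :=
  (∑ b : A_O, ∫ u in (0:ℝ)..(∑ a ∈ Finset.univ.filter (fun a => π a = b), w a), s b u) +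
    (1 / β) * ∑ i ∈ Finset.univ.filter (fun i : I => i ≠ G.d),
      ((∑ a ∈ Finset.univ.filter (fun a => G.src a = i), w a * Real.log (w a)) -
        (∑ a ∈ Finset.univ.filter (fun a => G.src a = i), w a) *
          Real.log (∑ a ∈ Finset.univ.filter (fun a => G.src a = i), w a))

end CondensedDAG


section AuxLemmas

open MeasureTheory

private lemma primitive_combo_lt {s : ℝ → ℝ} (hmono : StrictMonoOn s (Set.Ici 0))
    (hcont : ContinuousOn s (Set.Ici 0)) {x y lam mu : ℝ}
    (hx : 0 ≤ x) (hxy : x < y) (hlam : 0 < lam) (hmu : 0 < mu) (hlm : lam + mu = 1) :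
    (∫ u in (0:ℝ)..(lam * x + mu * y), s u) ≤
      lam * (∫ u in (0:ℝ)..x, s u) + mu * ∫ u in (0:ℝ)..y, s u := by
  set z := lam * x + mu * y with hzdef
  have hy : 0 ≤ y := le_of_lt (lt_of_le_of_lt hx hxy)
  have hxz : x < z := by nlinarith
  have hzy : z < y := by nlinarith
  have hz0 : 0 ≤ z := le_trans hx hxz.le
  have hint : ∀ {a b : ℝ}, 0 ≤ a → a ≤ b → IntervalIntegrable s volume a b := by
    intro a b ha hab
    refine (hcont.mono ?_).intervalIntegrable
    rw [Set.uIcc_of_le hab]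
    exact fun u hu => le_trans ha hu.1
  have hadd1 : (∫ u in (0:ℝ)..x, s u) + (∫ u in x..z, s u) = ∫ u in (0:ℝ)..z, s u :=
    intervalIntegral.integral_add_adjacent_intervals (hint le_rfl hx) (hint hx hxz.le)
  have hadd2 : (∫ u in (0:ℝ)..z, s u) + (∫ u in z..y, s u) = ∫ u in (0:ℝ)..y, s u :=
    intervalIntegral.integral_add_adjacent_intervals (hint le_rfl hz0) (hint hz0 hzy.le)
  have hub : (∫ u in x..z, s u) ≤ (z - x) * s z := by
    have := intervalIntegral.integral_mono_on (μ := volume) (f := s) (g := fun _ => s z)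
      hxz.le (hint hx hxz.le) intervalIntegrable_const
      (fun u hu => hmono.monotoneOn (le_trans hx hu.1) hz0 hu.2)
    simpa using this
  have hlb : (y - z) * s z ≤ ∫ u in z..y, s u := by
    have := intervalIntegral.integral_mono_on (μ := volume) (f := fun _ => s z) (g := s)
      hzy.le intervalIntegrable_const (hint hz0 hzy.le)
      (fun u hu => hmono.monotoneOn hz0 (le_trans hz0 hu.1) hu.1)
    simpa using this
  have hid : lam * (z - x) = mu * (y - z) := by
    rw [hzdef]; linear_combination (lam * x + mu * y) * hlm
  have h1 : lam * (∫ u in x..z, s u) ≤ mu * ((y - z) * s z) := by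
    calc lam * (∫ u in x..z, s u) ≤ lam * ((z - x) * s z) :=
          mul_le_mul_of_nonneg_left hub hlam.le
      _ = mu * ((y - z) * s z) := by rw [← mul_assoc, hid, mul_assoc]
  have h2 : mu * ((y - z) * s z) ≤ mu * ∫ u in z..y, s u := mul_le_mul_of_nonneg_left hlb hmu.le
  have h3 : lam * (∫ u in (0:ℝ)..z, s u) + mu * (∫ u in (0:ℝ)..z, s u) = ∫ u in (0:ℝ)..z, s u := by
    rw [← add_mul, hlm, one_mul]
  have h4 : lam * ((∫ u in (0:ℝ)..x, s u) + (∫ u in x..z, s u)) = lam * ∫ u in (0:ℝ)..z, s u := by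
    rw [hadd1]
  have h5 : mu * ((∫ u in (0:ℝ)..z, s u) + (∫ u in z..y, s u)) = mu * ∫ u in (0:ℝ)..y, s u := by
    rw [hadd2]
  rw [mul_add] at h4 h5
  linarith

private lemma primitive_combo_le {s : ℝ → ℝ} (hmono : StrictMonoOn s (Set.Ici 0))
    (hcont : ContinuousOn s (Set.Ici 0)) {x y lam mu : ℝ}
    (hx : 0 ≤ x) (hy : 0 ≤ y) (hlam : 0 < lam) (hmu : 0 < mu) (hlm : lam + mu = 1) :
    (∫ u in (0:ℝ)..(lam * x + mu * y), s u) ≤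
      lam * (∫ u in (0:ℝ)..x, s u) + mu * ∫ u in (0:ℝ)..y, s u := by
  rcases lt_trichotomy x y with h | h | h
  · exact primitive_combo_lt hmono hcont hx h hlam hmu hlm
  · subst h
    rw [show lam * x + mu * x = x by linear_combination x * hlm, ← add_mul, hlm, one_mul]
  · have h2 := primitive_combo_lt hmono hcont hy h hmu hlam (by linarith)
    rw [show mu * y + lam * x = lam * x + mu * y by ring] at h2
    linarith

private lemma mul_div_log {x S : ℝ} (hx : 0 ≤ x) (hS : 0 < S) :
    S * (x / S * Real.log (x / S)) = x * Real.log x - x * Real.log S := by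
  rcases eq_or_lt_of_le hx with h | h
  · simp [← h]
  · rw [Real.log_div (ne_of_gt h) (ne_of_gt hS)]
    field_simp

private lemma psi_smul {c x S : ℝ} (hc : 0 < c) (hx : 0 ≤ x) (hxS : x ≤ S) :
    c * x * Real.log (c * x) - c * x * Real.log (c * S) =
      c * (x * Real.log x - x * Real.log S) := by
  rcases eq_or_lt_of_le hx with h | h
  · simp [← h]
  · have hS : 0 < S := lt_of_lt_of_le h hxS
    rw [Real.log_mul (ne_of_gt hc) (ne_of_gt h), Real.log_mul (ne_of_gt hc) (ne_of_gt hS)]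
    ring

private lemma logsum {p q P Q : ℝ} (hp : 0 ≤ p) (hq : 0 ≤ q) (hpP : p ≤ P) (hqQ : q ≤ Q) :
    ((p + q) * Real.log (p + q) - (p + q) * Real.log (P + Q) ≤
      (p * Real.log p - p * Real.log P) + (q * Real.log q - q * Real.log Q)) ∧
    (p * Q ≠ q * P →
      (p + q) * Real.log (p + q) - (p + q) * Real.log (P + Q) <
        (p * Real.log p - p * Real.log P) + (q * Real.log q - q * Real.log Q)) := by
  have hP : 0 ≤ P := le_trans hp hpP
  have hQ : 0 ≤ Q := le_trans hq hqQ
  rcases eq_or_lt_of_le hP with hP0 | hP0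
  · have hp0 : p = 0 := le_antisymm (hP0 ▸ hpP) hp
    subst hp0
    rw [← hP0]
    constructor
    · simp
    · intro hne; exact absurd (by ring) hne
  rcases eq_or_lt_of_le hQ with hQ0 | hQ0
  · have hq0 : q = 0 := le_antisymm (hQ0 ▸ hqQ) hq
    subst hq0
    rw [← hQ0]
    constructor
    · simp
    · intro hne; exact absurd (by ring) hne
  · have hPQ : 0 < P + Q := by linarith
    have hmem1 : p / P ∈ Set.Ici (0 : ℝ) := div_nonneg hp hP
    have hmem2 : q / Q ∈ Set.Ici (0 : ℝ) := div_nonneg hq hQ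
    have hw1 : 0 < P / (P + Q) := div_pos hP0 hPQ
    have hw2 : 0 < Q / (P + Q) := div_pos hQ0 hPQ
    have hw12 : P / (P + Q) + Q / (P + Q) = 1 := by field_simp
    have hPne : P ≠ 0 := ne_of_gt hP0
    have hQne : Q ≠ 0 := ne_of_gt hQ0
    have hPQne : P + Q ≠ 0 := ne_of_gt hPQ
    have hcomb : P / (P + Q) * (p / P) + Q / (P + Q) * (q / Q) = (p + q) / (P + Q) := by
      field_simp
    have e1 : (P + Q) * ((p + q) / (P + Q) * Real.log ((p + q) / (P + Q))) =
        (p + q) * Real.log (p + q) - (p + q) * Real.log (P + Q) :=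
      mul_div_log (by linarith) hPQ
    have e2 : (P + Q) * (P / (P + Q) * (p / P * Real.log (p / P))) =
        p * Real.log p - p * Real.log P := by
      rw [show (P + Q) * (P / (P + Q) * (p / P * Real.log (p / P))) =
          P * (p / P * Real.log (p / P)) by field_simp]
      exact mul_div_log hp hP0
    have e3 : (P + Q) * (Q / (P + Q) * (q / Q * Real.log (q / Q))) =
        q * Real.log q - q * Real.log Q := by
      rw [show (P + Q) * (Q / (P + Q) * (q / Q * Real.log (q / Q))) =
          Q * (q / Q * Real.log (q / Q)) by field_simp]
      exact mul_div_log hq hQ0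
    constructor
    · have hle := Real.strictConvexOn_mul_log.convexOn.2 hmem1 hmem2 hw1.le hw2.le hw12
      simp only [smul_eq_mul] at hle
      rw [hcomb] at hle
      have := mul_le_mul_of_nonneg_left hle hPQ.le
      rw [e1, mul_add, e2, e3] at this
      exact this
    · intro hne
      have hxy : p / P ≠ q / Q := by
        intro h
        exact hne (by rw [div_eq_div_iff (ne_of_gt hP0) (ne_of_gt hQ0)] at h; linarith)
      have hlt := Real.strictConvexOn_mul_log.2 hmem1 hmem2 hxy hw1 hw2 hw12
      simp only [smul_eq_mul] at hlt
      rw [hcomb] at hlt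
      have := mul_lt_mul_of_pos_left hlt hPQ
      rw [e1, mul_add, e2, e3] at this
      exact this

private lemma entropy_combo {α : Type*} (t : Finset α) (u v : α → ℝ)
    (hu : ∀ a ∈ t, 0 ≤ u a) (hv : ∀ a ∈ t, 0 ≤ v a) {lam mu : ℝ}
    (hlam : 0 < lam) (hmu : 0 < mu) :
    ((∑ a ∈ t, (lam * u a + mu * v a) * Real.log (lam * u a + mu * v a)) -
        (∑ a ∈ t, (lam * u a + mu * v a)) * Real.log (∑ a ∈ t, (lam * u a + mu * v a)) ≤
      lam * ((∑ a ∈ t, u a * Real.log (u a)) -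
          (∑ a ∈ t, u a) * Real.log (∑ a ∈ t, u a)) +
        mu * ((∑ a ∈ t, v a * Real.log (v a)) -
          (∑ a ∈ t, v a) * Real.log (∑ a ∈ t, v a))) ∧
    ((∑ a ∈ t, (lam * u a + mu * v a) * Real.log (lam * u a + mu * v a)) -
        (∑ a ∈ t, (lam * u a + mu * v a)) * Real.log (∑ a ∈ t, (lam * u a + mu * v a)) =
      lam * ((∑ a ∈ t, u a * Real.log (u a)) -
          (∑ a ∈ t, u a) * Real.log (∑ a ∈ t, u a)) +
        mu * ((∑ a ∈ t, v a * Real.log (v a)) -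
          (∑ a ∈ t, v a) * Real.log (∑ a ∈ t, v a)) →
      ∀ a ∈ t, u a * (∑ b ∈ t, v b) = v a * (∑ b ∈ t, u b)) := by
  classical
  have hsum : (∑ a ∈ t, (lam * u a + mu * v a)) =
      lam * (∑ a ∈ t, u a) + mu * (∑ a ∈ t, v a) := by
    rw [Finset.sum_add_distrib, ← Finset.mul_sum, ← Finset.mul_sum]
  have hle : ∀ a ∈ t,
      (lam * u a + mu * v a) * Real.log (lam * u a + mu * v a) -
        (lam * u a + mu * v a) *
          Real.log (lam * (∑ b ∈ t, u b) + mu * (∑ b ∈ t, v b)) ≤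
      lam * (u a * Real.log (u a) - u a * Real.log (∑ b ∈ t, u b)) +
        mu * (v a * Real.log (v a) - v a * Real.log (∑ b ∈ t, v b)) := by
    intro a ha
    have h1 := (logsum (mul_nonneg hlam.le (hu a ha)) (mul_nonneg hmu.le (hv a ha))
      (mul_le_mul_of_nonneg_left (Finset.single_le_sum hu ha) hlam.le)
      (mul_le_mul_of_nonneg_left (Finset.single_le_sum hv ha) hmu.le)).1
    rw [psi_smul hlam (hu a ha) (Finset.single_le_sum hu ha),
      psi_smul hmu (hv a ha) (Finset.single_le_sum hv ha)] at h1
    exact h1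
  have EL : (∑ a ∈ t, (lam * u a + mu * v a) * Real.log (lam * u a + mu * v a)) -
      (∑ a ∈ t, (lam * u a + mu * v a)) * Real.log (∑ a ∈ t, (lam * u a + mu * v a)) =
      ∑ a ∈ t, ((lam * u a + mu * v a) * Real.log (lam * u a + mu * v a) -
        (lam * u a + mu * v a) *
          Real.log (lam * (∑ b ∈ t, u b) + mu * (∑ b ∈ t, v b))) := by
    rw [Finset.sum_sub_distrib, ← Finset.sum_mul, hsum]
  have ER : lam * ((∑ a ∈ t, u a * Real.log (u a)) -
        (∑ a ∈ t, u a) * Real.log (∑ a ∈ t, u a)) +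
      mu * ((∑ a ∈ t, v a * Real.log (v a)) -
        (∑ a ∈ t, v a) * Real.log (∑ a ∈ t, v a)) =
      ∑ a ∈ t, (lam * (u a * Real.log (u a) - u a * Real.log (∑ b ∈ t, u b)) +
        mu * (v a * Real.log (v a) - v a * Real.log (∑ b ∈ t, v b))) := by
    rw [Finset.sum_add_distrib, ← Finset.mul_sum, ← Finset.mul_sum,
      Finset.sum_sub_distrib, Finset.sum_sub_distrib, ← Finset.sum_mul, ← Finset.sum_mul]
  constructor
  · rw [EL, ER]
    exact Finset.sum_le_sum hle
  · intro heq a ha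
    rw [EL, ER] at heq
    have hterm := ((Finset.sum_eq_sum_iff_of_le hle).1 heq) a ha
    by_contra hne
    have hne' : lam * u a * (mu * (∑ b ∈ t, v b)) ≠ mu * v a * (lam * (∑ b ∈ t, u b)) := by
      intro h
      apply hne
      have hlm2 : lam * mu ≠ 0 := by positivity
      apply mul_left_cancel₀ hlm2
      ring_nf
      ring_nf at h
      linarith
    have h2 := (logsum (mul_nonneg hlam.le (hu a ha)) (mul_nonneg hmu.le (hv a ha))
      (mul_le_mul_of_nonneg_left (Finset.single_le_sum hu ha) hlam.le)
      (mul_le_mul_of_nonneg_left (Finset.single_le_sum hv ha) hmu.le)).2 hne'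
    rw [psi_smul hlam (hu a ha) (Finset.single_le_sum hu ha),
      psi_smul hmu (hv a ha) (Finset.single_le_sum hv ha)] at h2
    exact h2.ne hterm

end AuxLemmas

namespace CondensedDAG
variable {I A : Type*} [Fintype I] [Fintype A]

private lemma not_src_d (G : CondensedDAG I A) (a : A) : G.src a ≠ G.d := by
  intro hd
  obtain ⟨r, ⟨hne, _, hlast, hchain⟩, hmem⟩ := G.covered a
  obtain ⟨n, hn, hget⟩ := List.getElem_of_mem hmem
  have hdrop : r.drop n = a :: r.drop (n + 1) := by
    rw [List.drop_eq_getElem_cons hn, hget]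
  have hchain' : List.Chain' (fun x y => G.tgt x = G.src y) (a :: r.drop (n + 1)) := by
    rw [← hdrop]
    exact hchain.infix (List.drop_suffix n r).isInfix
  have hgl : r.getLast? = (a :: r.drop (n + 1)).getLast? := by
    conv_lhs => rw [← List.take_append_drop n r]
    rw [List.getLast?_append_of_ne_nil _ (by rw [hdrop]; exact List.cons_ne_nil _ _), hdrop]
  have hd2 : G.tgt ((a :: r.drop (n + 1)).getLast (List.cons_ne_nil _ _)) = G.d := by
    apply hlast
    rw [hgl]
    exact (List.getLast?_eq_getLast_of_ne_nil _).symm ▸ rfl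
  exact G.acyclic a (r.drop (n + 1)) hchain' (by rw [hd2, hd])

private lemma exists_chain_of_transGen (G : CondensedDAG I A) {i j : I}
    (h : Relation.TransGen (fun x y => ∃ a, G.src a = x ∧ G.tgt a = y) i j) :
    ∃ (a : A) (l : List A), G.src a = i ∧
      List.Chain' (fun x y => G.tgt x = G.src y) (a :: l) ∧
      G.tgt ((a :: l).getLast (List.cons_ne_nil a l)) = j := by
  induction h with
  | single h =>
      obtain ⟨a, ha1, ha2⟩ := h
      exact ⟨a, [], ha1, List.isChain_singleton a, ha2⟩
  | tail _ hbc ih =>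
      obtain ⟨a, l, hsrc, hchain, hlast⟩ := ih
      obtain ⟨b, hb1, hb2⟩ := hbc
      have hsplit : a :: (l ++ [b]) = (a :: l) ++ [b] := by simp
      refine ⟨a, l ++ [b], hsrc, ?_, ?_⟩
      · rw [hsplit, List.Chain', List.isChain_append]
        refine ⟨hchain, List.isChain_singleton b, ?_⟩
        intro x hx y hy
        simp only [List.head?_cons, Option.mem_def, Option.some.injEq] at hy
        rw [List.getLast?_eq_getLast_of_ne_nil (List.cons_ne_nil a l)] at hx
        simp only [Option.mem_def, Option.some.injEq] at hx
        rw [← hx, ← hy] at *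
        rw [hlast, hb1]
      · have key : (a :: (l ++ [b])).getLast (List.cons_ne_nil _ _) = b :=
          List.getLast_append_singleton (a :: l)
        rw [key]
        exact hb2

private lemma wf_pred (G : CondensedDAG I A) :
    WellFounded (fun j i : I => ∃ a, G.src a = j ∧ G.tgt a = i) := by
  have hirr : ∀ i : I, ¬ Relation.TransGen (fun x y : I => ∃ a, G.src a = x ∧ G.tgt a = y) i i := by
    intro i h
    obtain ⟨a, l, hsrc, hchain, hlast⟩ := exists_chain_of_transGen G h
    exact G.acyclic a l hchain (by rw [hlast, hsrc])
  have hwf : WellFounded (Relation.TransGen fun x y : I => ∃ a, G.src a = x ∧ G.tgt a = y) := by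
    haveI : IsTrans I (Relation.TransGen fun x y : I => ∃ a, G.src a = x ∧ G.tgt a = y) :=
      ⟨fun _ _ _ => Relation.TransGen.trans⟩
    haveI : IsIrrefl I (Relation.TransGen fun x y : I => ∃ a, G.src a = x ∧ G.tgt a = y) :=
      ⟨hirr⟩
    exact Finite.wellFounded_of_trans_of_irrefl _
  exact Subrelation.wf (fun {x y} h => Relation.TransGen.single h) hwf

end CondensedDAG

/-- the objective `F` is strictly convex on the (convex) feasible
flow set `W`, for strictly increasing continuous nonnegative latency functions
`s_b : [0,∞) → [0,∞)`, demand `g_o > 0` and `β > 0`. -/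
theorem strictConvexOn_objF
    {I A : Type*} [Fintype I] [Fintype A] [DecidableEq I]
    (G : CondensedDAG I A)
    (A_O : Type*) [Fintype A_O] [DecidableEq A_O]
    (π : A → A_O) (s : A_O → ℝ → ℝ)
    (hmono : ∀ b, StrictMonoOn (s b) (Set.Ici 0))
    (hcont : ∀ b, ContinuousOn (s b) (Set.Ici 0))
    (hnonneg : ∀ b, ∀ x ∈ Set.Ici (0:ℝ), 0 ≤ s b x)
    (gO β : ℝ) (hgO : 0 < gO) (hβ : 0 < β) :
    StrictConvexOn ℝ (G.feasible gO) (G.objF π s β) := by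
  classical
  constructor
  · -- Convexity of the feasible set
    rintro w ⟨hw0, hwo, hwc⟩ w' ⟨hw'0, hw'o, hw'c⟩ lam mu hlam hmu hlm
    simp only [CondensedDAG.feasible, Set.mem_setOf_eq, Pi.add_apply, Pi.smul_apply,
      smul_eq_mul]
    refine ⟨fun a => add_nonneg (mul_nonneg hlam (hw0 a)) (mul_nonneg hmu (hw'0 a)), ?_, ?_⟩
    · rw [Finset.sum_add_distrib, ← Finset.mul_sum, ← Finset.mul_sum, hwo, hw'o,
        ← add_mul, hlm, one_mul]
    · intro i hio hid
      rw [Finset.sum_add_distrib, ← Finset.mul_sum, ← Finset.mul_sum,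
        Finset.sum_add_distrib, ← Finset.mul_sum, ← Finset.mul_sum,
        hwc i hio hid, hw'c i hio hid]
  · rintro w ⟨hw0, hwo, hwc⟩ w' ⟨hw'0, hw'o, hw'c⟩ hne lam mu hlam hmu hlm
    simp only [CondensedDAG.objF, Pi.add_apply, Pi.smul_apply, smul_eq_mul]
    have hβ' : (0:ℝ) < 1 / β := by positivity
    -- the latency (integral) block
    have hXle : ∀ b : A_O,
        (∫ u in (0:ℝ)..(∑ a ∈ Finset.univ.filter (fun a => π a = b),
            (lam * w a + mu * w' a)), s b u) ≤
          lam * (∫ u in (0:ℝ)..(∑ a ∈ Finset.univ.filter (fun a => π a = b), w a), s b u) +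
            mu * (∫ u in (0:ℝ)..(∑ a ∈ Finset.univ.filter (fun a => π a = b), w' a), s b u) := by
      intro b
      rw [show (∑ a ∈ Finset.univ.filter (fun a => π a = b), (lam * w a + mu * w' a))
          = lam * (∑ a ∈ Finset.univ.filter (fun a => π a = b), w a)
            + mu * (∑ a ∈ Finset.univ.filter (fun a => π a = b), w' a) by
        rw [Finset.sum_add_distrib, ← Finset.mul_sum, ← Finset.mul_sum]]
      exact primitive_combo_le (hmono b) (hcont b)
        (Finset.sum_nonneg fun a _ => hw0 a) (Finset.sum_nonneg fun a _ => hw'0 a)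
        hlam hmu hlm
    have hX : (∑ b : A_O, ∫ u in (0:ℝ)..(∑ a ∈ Finset.univ.filter (fun a => π a = b),
            (lam * w a + mu * w' a)), s b u) ≤
          lam * (∑ b : A_O, ∫ u in (0:ℝ)..(∑ a ∈ Finset.univ.filter (fun a => π a = b),
            w a), s b u) +
          mu * (∑ b : A_O, ∫ u in (0:ℝ)..(∑ a ∈ Finset.univ.filter (fun a => π a = b),
            w' a), s b u) := by
      rw [Finset.mul_sum, Finset.mul_sum, ← Finset.sum_add_distrib]
      exact Finset.sum_le_sum fun b _ => hXle b
    -- the entropy block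
    have hEC := fun i : I => entropy_combo (Finset.univ.filter fun a => G.src a = i) w w'
      (fun a _ => hw0 a) (fun a _ => hw'0 a) hlam hmu
    have hYle : ∀ i ∈ Finset.univ.filter (fun i : I => i ≠ G.d),
        (∑ a ∈ Finset.univ.filter (fun a => G.src a = i),
            (lam * w a + mu * w' a) * Real.log (lam * w a + mu * w' a)) -
          (∑ a ∈ Finset.univ.filter (fun a => G.src a = i), (lam * w a + mu * w' a)) *
            Real.log (∑ a ∈ Finset.univ.filter (fun a => G.src a = i),
              (lam * w a + mu * w' a)) ≤
        lam * ((∑ a ∈ Finset.univ.filter (fun a => G.src a = i), w a * Real.log (w a)) -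
            (∑ a ∈ Finset.univ.filter (fun a => G.src a = i), w a) *
              Real.log (∑ a ∈ Finset.univ.filter (fun a => G.src a = i), w a)) +
          mu * ((∑ a ∈ Finset.univ.filter (fun a => G.src a = i), w' a * Real.log (w' a)) -
            (∑ a ∈ Finset.univ.filter (fun a => G.src a = i), w' a) *
              Real.log (∑ a ∈ Finset.univ.filter (fun a => G.src a = i), w' a)) :=
      fun i _ => (hEC i).1
    have hY := Finset.sum_le_sum hYle
    refine lt_of_le_of_ne ?_ ?_
    · calc _ ≤ (lam * (∑ b : A_O, ∫ u in (0:ℝ)..(∑ a ∈ Finset.univ.filter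
              (fun a => π a = b), w a), s b u) +
            mu * (∑ b : A_O, ∫ u in (0:ℝ)..(∑ a ∈ Finset.univ.filter
              (fun a => π a = b), w' a), s b u)) +
            (1 / β) * ∑ i ∈ Finset.univ.filter (fun i : I => i ≠ G.d),
              (lam * ((∑ a ∈ Finset.univ.filter (fun a => G.src a = i),
                  w a * Real.log (w a)) -
                (∑ a ∈ Finset.univ.filter (fun a => G.src a = i), w a) *
                  Real.log (∑ a ∈ Finset.univ.filter (fun a => G.src a = i), w a)) +
              mu * ((∑ a ∈ Finset.univ.filter (fun a => G.src a = i),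
                  w' a * Real.log (w' a)) -
                (∑ a ∈ Finset.univ.filter (fun a => G.src a = i), w' a) *
                  Real.log (∑ a ∈ Finset.univ.filter (fun a => G.src a = i), w' a))) :=
            add_le_add hX (mul_le_mul_of_nonneg_left hY hβ'.le)
        _ = _ := by
            rw [Finset.sum_add_distrib, ← Finset.mul_sum, ← Finset.mul_sum]
            ring
    · intro heq
      -- from equality, each block is an equality
      have heqY : (∑ i ∈ Finset.univ.filter (fun i : I => i ≠ G.d),
          ((∑ a ∈ Finset.univ.filter (fun a => G.src a = i),
              (lam * w a + mu * w' a) * Real.log (lam * w a + mu * w' a)) -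
            (∑ a ∈ Finset.univ.filter (fun a => G.src a = i), (lam * w a + mu * w' a)) *
              Real.log (∑ a ∈ Finset.univ.filter (fun a => G.src a = i),
                (lam * w a + mu * w' a)))) =
          ∑ i ∈ Finset.univ.filter (fun i : I => i ≠ G.d),
            (lam * ((∑ a ∈ Finset.univ.filter (fun a => G.src a = i),
                w a * Real.log (w a)) -
              (∑ a ∈ Finset.univ.filter (fun a => G.src a = i), w a) *
                Real.log (∑ a ∈ Finset.univ.filter (fun a => G.src a = i), w a)) +
            mu * ((∑ a ∈ Finset.univ.filter (fun a => G.src a = i),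
                w' a * Real.log (w' a)) -
              (∑ a ∈ Finset.univ.filter (fun a => G.src a = i), w' a) *
                Real.log (∑ a ∈ Finset.univ.filter (fun a => G.src a = i), w' a))) := by
        have hrw : lam * ((∑ b : A_O, ∫ u in (0:ℝ)..(∑ a ∈ Finset.univ.filter
              (fun a => π a = b), w a), s b u) +
            1 / β * ∑ i ∈ Finset.univ.filter (fun i : I => i ≠ G.d),
              ((∑ a ∈ Finset.univ.filter (fun a => G.src a = i), w a * Real.log (w a)) -
                (∑ a ∈ Finset.univ.filter (fun a => G.src a = i), w a) *
                  Real.log (∑ a ∈ Finset.univ.filter (fun a => G.src a = i), w a))) +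
            mu * ((∑ b : A_O, ∫ u in (0:ℝ)..(∑ a ∈ Finset.univ.filter
              (fun a => π a = b), w' a), s b u) +
            1 / β * ∑ i ∈ Finset.univ.filter (fun i : I => i ≠ G.d),
              ((∑ a ∈ Finset.univ.filter (fun a => G.src a = i), w' a * Real.log (w' a)) -
                (∑ a ∈ Finset.univ.filter (fun a => G.src a = i), w' a) *
                  Real.log (∑ a ∈ Finset.univ.filter (fun a => G.src a = i), w' a))) =
          (lam * (∑ b : A_O, ∫ u in (0:ℝ)..(∑ a ∈ Finset.univ.filter
              (fun a => π a = b), w a), s b u) +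
            mu * (∑ b : A_O, ∫ u in (0:ℝ)..(∑ a ∈ Finset.univ.filter
              (fun a => π a = b), w' a), s b u)) +
            (1 / β) * ∑ i ∈ Finset.univ.filter (fun i : I => i ≠ G.d),
              (lam * ((∑ a ∈ Finset.univ.filter (fun a => G.src a = i),
                  w a * Real.log (w a)) -
                (∑ a ∈ Finset.univ.filter (fun a => G.src a = i), w a) *
                  Real.log (∑ a ∈ Finset.univ.filter (fun a => G.src a = i), w a)) +
              mu * ((∑ a ∈ Finset.univ.filter (fun a => G.src a = i),
                  w' a * Real.log (w' a)) -
                (∑ a ∈ Finset.univ.filter (fun a => G.src a = i), w' a) *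
                  Real.log (∑ a ∈ Finset.univ.filter (fun a => G.src a = i), w' a))) := by
          rw [Finset.sum_add_distrib, ← Finset.mul_sum, ← Finset.mul_sum]
          ring
        rw [hrw] at heq
        have hconsume : (1 / β) * (∑ i ∈ Finset.univ.filter (fun i : I => i ≠ G.d),
            ((∑ a ∈ Finset.univ.filter (fun a => G.src a = i),
              (lam * w a + mu * w' a) * Real.log (lam * w a + mu * w' a)) -
            (∑ a ∈ Finset.univ.filter (fun a => G.src a = i), (lam * w a + mu * w' a)) *
              Real.log (∑ a ∈ Finset.univ.filter (fun a => G.src a = i),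
                (lam * w a + mu * w' a)))) =
            (1 / β) * (∑ i ∈ Finset.univ.filter (fun i : I => i ≠ G.d),
              (lam * ((∑ a ∈ Finset.univ.filter (fun a => G.src a = i),
                  w a * Real.log (w a)) -
                (∑ a ∈ Finset.univ.filter (fun a => G.src a = i), w a) *
                  Real.log (∑ a ∈ Finset.univ.filter (fun a => G.src a = i), w a)) +
              mu * ((∑ a ∈ Finset.univ.filter (fun a => G.src a = i),
                  w' a * Real.log (w' a)) -
                (∑ a ∈ Finset.univ.filter (fun a => G.src a = i), w' a) *
                  Real.log (∑ a ∈ Finset.univ.filter (fun a => G.src a = i), w' a)))) := by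
          linarith [mul_le_mul_of_nonneg_left hY hβ'.le]
        exact mul_left_cancel₀ (ne_of_gt hβ') hconsume
      have heach := (Finset.sum_eq_sum_iff_of_le hYle).1 heqY
      have hprop : ∀ i : I, i ≠ G.d → ∀ a : A, G.src a = i →
          w a * (∑ b ∈ Finset.univ.filter (fun b => G.src b = i), w' b) =
            w' a * (∑ b ∈ Finset.univ.filter (fun b => G.src b = i), w b) := by
        intro i hid a ha
        exact (hEC i).2 (heach i (Finset.mem_filter.mpr ⟨Finset.mem_univ i, hid⟩)) a
          (Finset.mem_filter.mpr ⟨Finset.mem_univ a, ha⟩)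
      have key : ∀ i : I, ∀ a : A, G.src a = i → w a = w' a := by
        intro i
        refine (CondensedDAG.wf_pred G).induction
          (C := fun i => ∀ a : A, G.src a = i → w a = w' a) i ?_
        intro i IH a ha
        by_cases hid : i = G.d
        · exact absurd (ha.trans hid) (CondensedDAG.not_src_d G a)
        · have hSS : (∑ b ∈ Finset.univ.filter (fun b => G.src b = i), w b)
              = ∑ b ∈ Finset.univ.filter (fun b => G.src b = i), w' b := by
            by_cases hio : i = G.o
            · subst hio
              rw [hwo, hw'o]
            · rw [hwc i hio hid, hw'c i hio hid]
              refine Finset.sum_congr rfl fun b hb => ?_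
              exact IH (G.src b) ⟨b, rfl, (Finset.mem_filter.mp hb).2⟩ b rfl
          rcases eq_or_lt_of_le (Finset.sum_nonneg fun b _ => hw0 b :
              (0:ℝ) ≤ ∑ b ∈ Finset.univ.filter (fun b => G.src b = i), w b) with h0 | h0
          · have hwa : w a = 0 :=
              (Finset.sum_eq_zero_iff_of_nonneg fun b _ => hw0 b).1 h0.symm a
                (Finset.mem_filter.mpr ⟨Finset.mem_univ a, ha⟩)
            have h0' : (∑ b ∈ Finset.univ.filter (fun b => G.src b = i), w' b) = 0 := by
              rw [← hSS, ← h0]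
            have hw'a : w' a = 0 :=
              (Finset.sum_eq_zero_iff_of_nonneg fun b _ => hw'0 b).1 h0' a
                (Finset.mem_filter.mpr ⟨Finset.mem_univ a, ha⟩)
            rw [hwa, hw'a]
          · have hp := hprop i hid a ha
            rw [← hSS] at hp
            exact mul_right_cancel₀ (ne_of_gt h0) hp
      exact absurd (funext fun a => key (G.src a) a rfl) hne
end

section
/- Let G = (I, A, src, tgt, o, d) be a condensed DAG, β > 0, and let c : A → ℝ be arbitrary arc costs. Then there exists a unique function z : A → ℝ satisfying: z_a = c_a for every arc a with tgt(a) = d, and z_a = c_a − (1/β) ln( Σ_{a'∈A_{tgt(a)}^+} exp(−β z_{a'}) ) for every arc a with tgt(a) ≠ d. (Note that for every arc a with tgt(a) ≠ d, the set A_{tgt(a)}^+ is nonempty, since a lies on a route.) -/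
theorem WellFounded.existsUnique_recursion {α β : Type*} [Nonempty β] {r : α → α → Prop}
    (hr : WellFounded r) (F : α → (α → β) → β)
    (hF : ∀ a f g, (∀ b, r b a → f b = g b) → F a f = F a g) :
    ∃! z : α → β, ∀ a, z a = F a z := by
  classical
  let z : α → β := hr.fix fun a ih =>
    F a fun b => if h : r b a then ih b h else Classical.arbitrary β
  have hz : ∀ a, z a = F a z := fun a => by
    rw [show z a = _ from hr.fix_eq _ a]
    exact hF a _ _ fun b hb => dif_pos hb
  refine ⟨z, hz, fun w hw => funext fun a => ?_⟩
  induction a using hr.induction with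
  | _ a ih => rw [hw a, hz a]; exact hF a w z ih

namespace CondensedDAG

variable {I A : Type*} [Fintype I] [Fintype A] (G : CondensedDAG I A)

def Follows (b a : A) : Prop := G.tgt a = G.src b

theorem exists_chain_of_transGen_follows {a b : A} (h : Relation.TransGen G.Follows b a) :
    ∃ l : List A, List.IsChain (fun x y => G.tgt x = G.src y) (a :: l) ∧
      G.tgt ((a :: l).getLast (List.cons_ne_nil a l)) = G.src b := by
  induction h with
  | single h => exact ⟨[], List.isChain_singleton _, h⟩
  | tail _ hxy ih =>
    obtain ⟨l, hchain, hlast⟩ := ih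
    exact ⟨_ :: l, List.IsChain.cons_cons hxy hchain, by simpa [List.getLast_cons] using hlast⟩

theorem wellFounded_follows : WellFounded G.Follows := by
  have : Std.Irrefl (Relation.TransGen G.Follows) := ⟨fun a h => by
    obtain ⟨l, hchain, hlast⟩ := G.exists_chain_of_transGen_follows h
    exact G.acyclic a l hchain hlast⟩
  have : IsTrans A (Relation.TransGen G.Follows) := ⟨fun _ _ _ => .trans⟩
  exact Subrelation.wf Relation.TransGen.single (Finite.wellFounded_of_trans_of_irrefl _)

end CondensedDAG

theorem latencyToGo_existsUnique_general
    {I A : Type*} [Fintype I] [Fintype A] [DecidableEq I]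
    (G : CondensedDAG I A) (β : ℝ) (c : A → ℝ) :
    ∃! z : A → ℝ,
      (∀ a : A, G.tgt a = G.d → z a = c a) ∧
      (∀ a : A, G.tgt a ≠ G.d →
        z a = c a - (1 / β) * Real.log
          (∑ a' ∈ Finset.univ.filter (fun a' => G.src a' = G.tgt a),
            Real.exp (-β * z a'))) := by
  let F : A → (A → ℝ) → ℝ := fun a z =>
    if G.tgt a = G.d then c a
    else c a - (1 / β) * Real.log
      (∑ a' ∈ Finset.univ.filter (fun a' => G.src a' = G.tgt a), Real.exp (-β * z a'))
  have hF : ∀ a f g, (∀ b, G.Follows b a → f b = g b) → F a f = F a g := by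
    intro a f g hfg
    have hsum : ∑ a' ∈ Finset.univ.filter (fun a' => G.src a' = G.tgt a), Real.exp (-β * f a') =
        ∑ a' ∈ Finset.univ.filter (fun a' => G.src a' = G.tgt a), Real.exp (-β * g a') :=
      Finset.sum_congr rfl fun b hb => by rw [hfg b (Finset.mem_filter.1 hb).2.symm]
    simp only [F, hsum]
  refine (existsUnique_congr fun z => ?_).1 (G.wellFounded_follows.existsUnique_recursion F hF)
  constructor
  · intro hz
    exact ⟨fun a ha => by simpa [F, ha] using hz a, fun a ha => by simpa [F, ha] using hz a⟩
  · rintro ⟨hd, hnd⟩ a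
    by_cases ha : G.tgt a = G.d
    · simpa [F, ha] using hd a ha
    · simpa [F, ha] using hnd a ha

/-- for arbitrary arc costs `c : A → ℝ` and `β > 0`, there is a
unique `z : A → ℝ` satisfying the latency-to-go recursion on a condensed DAG. -/
theorem latencyToGo_existsUnique
    {I A : Type*} [Fintype I] [Fintype A] [DecidableEq I]
    (G : CondensedDAG I A) (β : ℝ) (hβ : 0 < β) (c : A → ℝ) :
    ∃! z : A → ℝ,
      (∀ a : A, G.tgt a = G.d → z a = c a) ∧
      (∀ a : A, G.tgt a ≠ G.d →
        z a = c a - (1 / β) * Real.log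
          (∑ a' ∈ Finset.univ.filter (fun a' => G.src a' = G.tgt a),
            Real.exp (-β * z a'))) :=
  latencyToGo_existsUnique_general G β c
end
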